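/- arXiv:0904.0538 — 2 statements merged into one kernel-verified Lean document; each statement's English description precedes it below -/
import Mathlib

section
/- Let 0 < α ≤ β ≤ 1 and let {X_{k,l}, k,l ≥ 0} be i.i.d. real random variables with X a generic copy whose distribution is symmetric (X and −X have the same law). If n P(|X| > n) → 0 as n → ∞, then (1/(A_m^α A_n^β)) Σ_{k=0}^m Σ_{l=0}^n A_{m-k}^{α-1} A_{n-l}^{β-1} X_{k,l} → 0 in probability as m, n → ∞ (i.e., as min(m,n) → ∞). -/
open MeasureTheory ProbabilityTheory Filter Finset Topology

/-- `cesaroA α n` is the Cesàro coefficient `A_n^α = (α+1)(α+2)⋯(α+n)/n!`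
(with `A_0^α = 1`). Note that this also gives `A_n^{-1} = 0` for `n ≥ 1`. -/
noncomputable def cesaroA (α : ℝ) (n : ℕ) : ℝ :=
  ∏ j ∈ Finset.range n, (α + (j + 1)) / (j + 1)

/-!
The Cesàro mean is `∑ w_{kl} X_{kl}` with weights `w_{kl} = A_{m-k}^{α-1} A_{n-l}^{β-1} / (A_m^α A_n^β)`
that are nonnegative, sum to `1` and, since `A_j^{γ-1} ≤ 1` for `0 < γ ≤ 1`, are all at most
`(A_m^α A_n^β)⁻¹ → 0`. For such weights a weak law holds: truncate `w X` at level `1`, i.e. `X` at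
level `1/w`. The truncated summands are centred by symmetry, so Chebyshev's inequality bounds the
truncated sum by `∑ E[(w X)²; |X| ≤ 1/w] ≤ ∑ o(w) = o(1)`, while the truncation changes the sum
with probability at most `∑ P(|X| > 1/w) ≤ ∑ o(w) = o(1)`. Both `o(w)` bounds come from
`t P(|X| > t) → 0`, the second through `E[X²; |X| ≤ t] ≤ ∑_{j < ⌈t⌉} (2j+1) P(|X| > j) = o(t)`.
-/

lemma one_add_sum_le_prod_one_add {ι : Type*} (s : Finset ι) {x : ι → ℝ}
    (hx : ∀ i ∈ s, 0 ≤ x i) : 1 + ∑ i ∈ s, x i ≤ ∏ i ∈ s, (1 + x i) := by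
  induction s using Finset.cons_induction with
  | empty => simp
  | cons a s ha ih =>
    rw [sum_cons, prod_cons]
    have hs := sum_nonneg fun i hi => hx i (mem_cons_of_mem hi)
    have ha := hx a (mem_cons_self a s)
    nlinarith [ih fun i hi => hx i (mem_cons_of_mem hi)]

section CesaroCoefficients

lemma cesaroA_succ (α : ℝ) (n : ℕ) :
    cesaroA α (n + 1) = cesaroA α n * ((α + (n + 1)) / (n + 1)) :=
  prod_range_succ _ n

lemma cesaroA_pos {α : ℝ} (hα : -1 < α) (n : ℕ) : 0 < cesaroA α n :=
  prod_pos fun j _ => div_pos (by linarith [j.cast_nonneg (α := ℝ)]) (by positivity)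

lemma cesaroA_le_one {α : ℝ} (hα : -1 < α) (hα0 : α ≤ 0) (n : ℕ) : cesaroA α n ≤ 1 :=
  prod_le_one (fun j _ => div_nonneg (by linarith [j.cast_nonneg (α := ℝ)]) (by positivity))
    fun j _ => (div_le_one (by positivity)).2 (by linarith)

lemma cesaroA_sub_one_succ (α : ℝ) (n : ℕ) :
    cesaroA (α - 1) (n + 1) = α / (n + 1) * cesaroA α n := by
  induction n with
  | zero => simp [cesaroA]
  | succ n ih =>
    rw [cesaroA_succ, ih, cesaroA_succ]
    push_cast
    field_simp
    ring

lemma sum_range_cesaroA_sub_one (α : ℝ) (m : ℕ) :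
    ∑ k ∈ range (m + 1), cesaroA (α - 1) k = cesaroA α m := by
  induction m with
  | zero => simp [cesaroA]
  | succ m ih =>
    rw [sum_range_succ, ih, cesaroA_sub_one_succ, cesaroA_succ]
    field_simp
    ring

lemma sum_range_cesaroA_sub_one_sub (α : ℝ) (m : ℕ) :
    ∑ k ∈ range (m + 1), cesaroA (α - 1) (m - k) = cesaroA α m := by
  rw [← sum_range_cesaroA_sub_one, ← sum_range_reflect (fun k => cesaroA (α - 1) k)]
  simp

lemma tendsto_cesaroA_atTop {α : ℝ} (hα : 0 < α) : Tendsto (cesaroA α) atTop atTop := by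
  have hprod : ∀ n, cesaroA α n = ∏ j ∈ range n, (1 + α / (j + 1)) := fun n =>
    prod_congr rfl fun j _ => by field_simp; ring
  have hharmonic : Tendsto (fun n => 1 + ∑ j ∈ range n, α / (j + 1 : ℝ)) atTop atTop := by
    refine tendsto_atTop_add_const_left _ 1 ?_
    simpa [mul_sum, div_eq_mul_one_div α] using
      Real.tendsto_sum_range_one_div_nat_succ_atTop.const_mul_atTop hα
  refine tendsto_atTop_mono (fun n => ?_) hharmonic
  rw [hprod]
  exact one_add_sum_le_prod_one_add _ fun j _ => by positivity

lemma tendsto_inv_cesaroA_mul_cesaroA {α β : ℝ} (hα : 0 < α) (hβ : 0 < β) :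
    Tendsto (fun mn : ℕ × ℕ => (cesaroA α mn.1 * cesaroA β mn.2)⁻¹) atTop (𝓝 0) := by
  rw [← prod_atTop_atTop_eq]
  exact tendsto_inv_atTop_zero.comp <|
    ((tendsto_cesaroA_atTop hα).comp tendsto_fst).atTop_mul_atTop₀
      ((tendsto_cesaroA_atTop hβ).comp tendsto_snd)

noncomputable def cesaroWeight (α β : ℝ) (mn kl : ℕ × ℕ) : ℝ :=
  cesaroA (α - 1) (mn.1 - kl.1) * cesaroA (β - 1) (mn.2 - kl.2) /
    (cesaroA α mn.1 * cesaroA β mn.2)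

variable {α β : ℝ}

lemma cesaroWeight_nonneg (hα : 0 < α) (hβ : 0 < β) (mn kl : ℕ × ℕ) :
    0 ≤ cesaroWeight α β mn kl := by
  unfold cesaroWeight
  have := cesaroA_pos (α := α - 1) (by linarith) (mn.1 - kl.1)
  have := cesaroA_pos (α := β - 1) (by linarith) (mn.2 - kl.2)
  have := cesaroA_pos (α := α) (by linarith) mn.1
  have := cesaroA_pos (α := β) (by linarith) mn.2
  positivity

lemma sum_cesaroWeight (hα : 0 < α) (hβ : 0 < β) (mn : ℕ × ℕ) :
    ∑ kl ∈ range (mn.1 + 1) ×ˢ range (mn.2 + 1), cesaroWeight α β mn kl = 1 := by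
  have hA := cesaroA_pos (α := α) (by linarith) mn.1
  have hB := cesaroA_pos (α := β) (by linarith) mn.2
  simp only [cesaroWeight]
  rw [← sum_div, sum_product]
  dsimp only
  rw [← sum_mul_sum, sum_range_cesaroA_sub_one_sub,
    sum_range_cesaroA_sub_one_sub, div_self (by positivity)]

lemma cesaroWeight_le (hα : 0 < α) (hα1 : α ≤ 1) (hβ : 0 < β) (hβ1 : β ≤ 1) (mn kl : ℕ × ℕ) :
    cesaroWeight α β mn kl ≤ (cesaroA α mn.1 * cesaroA β mn.2)⁻¹ := by
  rw [cesaroWeight, div_eq_mul_inv]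
  refine mul_le_of_le_one_left
    (inv_nonneg.2 (mul_pos (cesaroA_pos (by linarith) _) (cesaroA_pos (by linarith) _)).le) ?_
  exact mul_le_one₀ (cesaroA_le_one (by linarith) (by linarith) _)
    (cesaroA_pos (by linarith) _).le (cesaroA_le_one (by linarith) (by linarith) _)

end CesaroCoefficients

section Truncation

/-- `unitTrunc (w * x)` is `w` times the truncation of `x` at level `1 / w`. -/
noncomputable def unitTrunc (x : ℝ) : ℝ := if |x| ≤ 1 then x else 0

lemma measurable_unitTrunc : Measurable unitTrunc :=
  Measurable.ite (measurableSet_le measurable_abs measurable_const) measurable_id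
    measurable_const

lemma unitTrunc_neg (x : ℝ) : unitTrunc (-x) = -unitTrunc x := by
  by_cases h : |x| ≤ 1 <;> simp [unitTrunc, h]

lemma abs_unitTrunc_le_one (x : ℝ) : |unitTrunc x| ≤ 1 := by
  by_cases h : |x| ≤ 1 <;> simp [unitTrunc, h]

lemma unitTrunc_mul_sq {w : ℝ} (hw : 0 < w) (x : ℝ) :
    unitTrunc (w * x) ^ 2 = w ^ 2 * {y : ℝ | |y| ≤ w⁻¹}.indicator (· ^ 2) x := by
  have hiff : |w * x| ≤ 1 ↔ x ∈ {y : ℝ | |y| ≤ w⁻¹} := by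
    rw [Set.mem_ofPred_eq, abs_mul, abs_of_pos hw, ← le_inv_mul_iff₀ hw, mul_one]
  by_cases hx : x ∈ {y : ℝ | |y| ≤ w⁻¹}
  · rw [unitTrunc, if_pos (hiff.2 hx), Set.indicator_of_mem hx, mul_pow]
  · rw [unitTrunc, if_neg (hiff.not.2 hx), Set.indicator_of_notMem hx]
    simp

variable {Ω : Type*} [MeasurableSpace Ω] {μ : Measure Ω}

lemma integral_unitTrunc_eq_zero {Y : Ω → ℝ} (hY : IdentDistrib Y (-Y) μ μ) :
    ∫ ω, unitTrunc (Y ω) ∂μ = 0 := by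
  have h := (hY.comp measurable_unitTrunc).integral_eq
  simp only [Function.comp_def, Pi.neg_apply, unitTrunc_neg, integral_neg] at h
  linarith

lemma identDistrib_const_mul_neg {Y X0 : Ω → ℝ} (hY : IdentDistrib Y X0 μ μ)
    (hX0 : IdentDistrib X0 (-X0) μ μ) (c : ℝ) :
    IdentDistrib (fun ω => c * Y ω) (-fun ω => c * Y ω) μ μ := by
  convert (hY.trans (hX0.trans (hY.symm.comp measurable_neg))).const_mul c using 1
  ext ω
  show -(c * Y ω) = c * -Y ω
  ring

theorem measureReal_abs_sum_ge_le {κ : Type*} [IsProbabilityMeasure μ] {Y : κ → Ω → ℝ}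
    {s : Finset κ} (hY : ∀ p ∈ s, AEMeasurable (Y p) μ)
    (hindep : Set.Pairwise ↑s fun p q => IndepFun (Y p) (Y q) μ)
    (hsymm : ∀ p ∈ s, IdentDistrib (Y p) (-Y p) μ μ) {ε : ℝ} (hε : 0 < ε) :
    μ.real {ω | ε ≤ |∑ p ∈ s, Y p ω|} ≤
      ∑ p ∈ s, μ.real {ω | 1 < |Y p ω|} +
        (∑ p ∈ s, ∫ ω, unitTrunc (Y p ω) ^ 2 ∂μ) / ε ^ 2 := by
  set Z : κ → Ω → ℝ := fun p ω => unitTrunc (Y p ω)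
  have hZ : ∀ p ∈ s, MemLp (Z p) 2 μ := fun p hp =>
    MemLp.of_bound (measurable_unitTrunc.comp_aemeasurable (hY p hp)).aestronglyMeasurable 1
      (ae_of_all _ fun ω => abs_unitTrunc_le_one _)
  have hmean : ∫ ω, ∑ p ∈ s, Z p ω ∂μ = 0 := by
    rw [integral_finsetSum s fun p hp => (hZ p hp).integrable one_le_two]
    exact sum_eq_zero fun p hp => integral_unitTrunc_eq_zero (hsymm p hp)
  have hvar : variance (∑ p ∈ s, Z p) μ ≤ ∑ p ∈ s, ∫ ω, Z p ω ^ 2 ∂μ := by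
    rw [IndepFun.variance_sum hZ fun p hp q hq hpq =>
      (hindep hp hq hpq).comp measurable_unitTrunc measurable_unitTrunc]
    exact sum_le_sum fun p hp => variance_le_expectation_sq (hZ p hp).1
  have hchebyshev :
      μ.real {ω | ε ≤ |∑ p ∈ s, Z p ω|} ≤ (∑ p ∈ s, ∫ ω, Z p ω ^ 2 ∂μ) / ε ^ 2 := by
    have h := meas_ge_le_variance_div_sq (memLp_finsetSum' s hZ) hε
    simp only [Finset.sum_apply, hmean, sub_zero] at h
    refine (ENNReal.toReal_le_of_le_ofReal
      (div_nonneg (variance_nonneg _ _) (sq_nonneg _)) h).trans ?_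
    gcongr
  have hcover : {ω | ε ≤ |∑ p ∈ s, Y p ω|} ⊆
      (⋃ p ∈ s, {ω | 1 < |Y p ω|}) ∪ {ω | ε ≤ |∑ p ∈ s, Z p ω|} := by
    intro ω hω
    by_cases hsmall : ∀ p ∈ s, |Y p ω| ≤ 1
    · right
      have : ∑ p ∈ s, Z p ω = ∑ p ∈ s, Y p ω :=
        sum_congr rfl fun p hp => if_pos (hsmall p hp)
      simpa [this] using hω
    · push Not at hsmall
      obtain ⟨p, hp, hbig⟩ := hsmall
      exact Or.inl (Set.mem_biUnion hp hbig)
  calc μ.real {ω | ε ≤ |∑ p ∈ s, Y p ω|}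
      ≤ μ.real (⋃ p ∈ s, {ω | 1 < |Y p ω|}) + μ.real {ω | ε ≤ |∑ p ∈ s, Z p ω|} :=
        (measureReal_mono hcover).trans (measureReal_union_le _ _)
    _ ≤ _ := add_le_add (measureReal_biUnion_finset_le _ _) hchebyshev

end Truncation

section TailEstimates

variable {Ω : Type*} [MeasurableSpace Ω] {μ : Measure Ω} {X : Ω → ℝ}

lemma tendsto_mul_measureReal_lt_abs [IsFiniteMeasure μ]
    (hX : Tendsto (fun n : ℕ => (n : ℝ) * μ.real {ω | (n : ℝ) < |X ω|}) atTop (𝓝 0)) :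
    Tendsto (fun t : ℝ => t * μ.real {ω | t < |X ω|}) atTop (𝓝 0) := by
  have hfloor := (hX.comp (tendsto_nat_floor_atTop (α := ℝ))).const_mul 2
  rw [mul_zero] at hfloor
  refine squeeze_zero' ((eventually_ge_atTop 0).mono fun t ht => by positivity)
    ((eventually_ge_atTop 1).mono fun t ht => ?_) hfloor
  have hfloor_pos : (1 : ℝ) ≤ ⌊t⌋₊ := by exact_mod_cast Nat.one_le_floor_iff t |>.2 ht
  have ht2 : t ≤ 2 * ⌊t⌋₊ := by linarith [Nat.lt_floor_add_one t]
  have hmono : μ.real {ω | t < |X ω|} ≤ μ.real {ω | (⌊t⌋₊ : ℝ) < |X ω|} :=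
    measureReal_mono fun ω hω => (Nat.floor_le (zero_le_one.trans ht)).trans_lt hω
  calc t * μ.real {ω | t < |X ω|} ≤ 2 * ⌊t⌋₊ * μ.real {ω | (⌊t⌋₊ : ℝ) < |X ω|} := by
        gcongr
    _ = _ := by simp only [Function.comp_apply]; ring

lemma sq_le_sum_range_odd {x : ℝ} (hx : 0 ≤ x) {T : ℕ} (hxT : x ≤ T) :
    x ^ 2 ≤ ∑ j ∈ range T, {y : ℝ | (j : ℝ) < y}.indicator (fun _ => 2 * (j : ℝ) + 1) x := by
  have hodd : ∀ n : ℕ, ∑ j ∈ range n, (2 * (j : ℝ) + 1) = n ^ 2 := fun n => by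
    induction n with
    | zero => simp
    | succ n ih => rw [sum_range_succ, ih]; push_cast; ring
  have hfilter : (range T).filter (fun j : ℕ => (j : ℝ) < x) = range ⌈x⌉₊ := by
    ext j
    simp only [mem_filter, mem_range, ← Nat.lt_ceil]
    exact ⟨fun h => h.2, fun h => ⟨h.trans_le (Nat.ceil_le.2 hxT), h⟩⟩
  simp only [Set.indicator_apply, Set.mem_ofPred_eq]
  rw [← sum_filter, hfilter, hodd]
  gcongr
  exact Nat.le_ceil x

lemma integral_indicator_sq_le_sum [IsFiniteMeasure μ] (hXm : AEMeasurable X μ) (t : ℝ) :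
    ∫ ω, {y : ℝ | |y| ≤ t}.indicator (· ^ 2) (X ω) ∂μ ≤
      ∑ j ∈ range ⌈t⌉₊, (2 * j + 1) * μ.real {ω | (j : ℝ) < |X ω|} := by
  have hmeas : ∀ j : ℕ, NullMeasurableSet {ω | (j : ℝ) < |X ω|} μ := fun j =>
    nullMeasurableSet_lt aemeasurable_const hXm.abs
  have hint : ∀ j : ℕ,
      Integrable ({ω | (j : ℝ) < |X ω|}.indicator fun _ => 2 * (j : ℝ) + 1) μ :=
    fun j => (integrable_const _).indicator₀ (hmeas j)
  calc ∫ ω, {y : ℝ | |y| ≤ t}.indicator (· ^ 2) (X ω) ∂μ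
      ≤ ∫ ω, ∑ j ∈ range ⌈t⌉₊,
          {ω | (j : ℝ) < |X ω|}.indicator (fun _ => 2 * (j : ℝ) + 1) ω ∂μ := by
        refine integral_mono_of_nonneg (Eventually.of_forall fun ω =>
          Set.indicator_nonneg (fun y _ => sq_nonneg y) _)
          (integrable_finsetSum _ fun j _ => hint j) (Eventually.of_forall fun ω => ?_)
        dsimp only
        by_cases hω : X ω ∈ {y : ℝ | |y| ≤ t}
        · rw [Set.indicator_of_mem hω, ← sq_abs]
          exact sq_le_sum_range_odd (abs_nonneg _) (hω.trans (Nat.le_ceil t))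
        · rw [Set.indicator_of_notMem hω]
          exact sum_nonneg fun j _ => Set.indicator_nonneg (fun _ _ => by positivity) _
    _ = ∑ j ∈ range ⌈t⌉₊, (2 * j + 1) * μ.real {ω | (j : ℝ) < |X ω|} := by
        rw [integral_finsetSum _ fun j _ => hint j]
        refine sum_congr rfl fun j _ => ?_
        rw [integral_indicator₀ (hmeas j), setIntegral_const, smul_eq_mul, mul_comm]

lemma tendsto_inv_mul_integral_indicator_sq [IsFiniteMeasure μ] (hXm : AEMeasurable X μ)
    (hX : Tendsto (fun n : ℕ => (n : ℝ) * μ.real {ω | (n : ℝ) < |X ω|}) atTop (𝓝 0)) :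
    Tendsto (fun t : ℝ => t⁻¹ * ∫ ω, {y : ℝ | |y| ≤ t}.indicator (· ^ 2) (X ω) ∂μ)
      atTop (𝓝 0) := by
  set u : ℕ → ℝ := fun j => (2 * j + 1) * μ.real {ω | (j : ℝ) < |X ω|}
  have hu : Tendsto u atTop (𝓝 0) := by
    have h := ((tendsto_const_nhds (x := (2 : ℝ))).add tendsto_inv_atTop_nhds_zero_nat).mul hX
    rw [add_zero, mul_zero] at h
    refine h.congr' <| (eventually_ge_atTop 1).mono fun j hj => ?_
    have : (j : ℝ) ≠ 0 := by positivity
    simp only [u]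
    field_simp
  have hceil := (hu.cesaro.comp (tendsto_nat_ceil_atTop (α := ℝ))).const_mul 2
  rw [mul_zero] at hceil
  refine squeeze_zero' ((eventually_ge_atTop 0).mono fun t ht => ?_)
    ((eventually_ge_atTop 1).mono fun t ht => ?_) hceil
  · exact mul_nonneg (inv_nonneg.2 ht) <| integral_nonneg fun ω =>
      Set.indicator_nonneg (fun y _ => sq_nonneg y) _
  have hceil_le : (⌈t⌉₊ : ℝ) ≤ 2 * t := by
    linarith [Nat.ceil_lt_add_one (zero_le_one.trans ht)]
  have hsum_nonneg : 0 ≤ ∑ j ∈ range ⌈t⌉₊, u j := sum_nonneg fun j _ => by positivity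
  calc t⁻¹ * ∫ ω, {y : ℝ | |y| ≤ t}.indicator (· ^ 2) (X ω) ∂μ
      ≤ t⁻¹ * ∑ j ∈ range ⌈t⌉₊, u j := by gcongr; exact integral_indicator_sq_le_sum hXm t
    _ ≤ (2 * (⌈t⌉₊ : ℝ)⁻¹) * ∑ j ∈ range ⌈t⌉₊, u j := by
        gcongr
        rw [inv_le_iff_one_le_mul₀ (by linarith)]
        field_simp
        linarith
    _ = _ := by simp only [Function.comp_apply]; ring

lemma exists_pos_forall_le_of_tendsto_inv {f : ℝ → ℝ} (hf : Tendsto f atTop (𝓝 0)) {δ : ℝ}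
    (hδ : 0 < δ) : ∃ η > 0, ∀ w, 0 < w → w ≤ η → f w⁻¹ ≤ δ := by
  obtain ⟨N, hN⟩ := eventually_atTop.1 (hf.eventually (ge_mem_nhds hδ))
  refine ⟨(max N 1)⁻¹, by positivity, fun w hw hwη => hN _ ?_⟩
  exact (le_max_left N 1).trans ((le_inv_comm₀ (by positivity) hw).2 hwη)

lemma exists_measureReal_one_lt_abs_mul_le [IsFiniteMeasure μ]
    (hX : Tendsto (fun n : ℕ => (n : ℝ) * μ.real {ω | (n : ℝ) < |X ω|}) atTop (𝓝 0))
    {δ : ℝ} (hδ : 0 < δ) :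
    ∃ η > 0, ∀ w, 0 ≤ w → w ≤ η → μ.real {ω | 1 < |w * X ω|} ≤ δ * w := by
  obtain ⟨η, hη, hbound⟩ :=
    exists_pos_forall_le_of_tendsto_inv (tendsto_mul_measureReal_lt_abs hX) hδ
  refine ⟨η, hη, fun w hw0 hwη => ?_⟩
  rcases hw0.eq_or_lt with rfl | hw
  · simp [not_lt.2 zero_le_one]
  have hset : {ω | 1 < |w * X ω|} = {ω | w⁻¹ < |X ω|} := by
    ext ω
    simp only [Set.mem_ofPred_eq, abs_mul, abs_of_pos hw, inv_lt_iff_one_lt_mul₀ hw, mul_comm]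
  have h := hbound w hw hwη
  rw [hset]
  rwa [inv_mul_le_iff₀ hw, mul_comm] at h

lemma exists_integral_unitTrunc_mul_sq_le [IsFiniteMeasure μ] (hXm : AEMeasurable X μ)
    (hX : Tendsto (fun n : ℕ => (n : ℝ) * μ.real {ω | (n : ℝ) < |X ω|}) atTop (𝓝 0))
    {δ : ℝ} (hδ : 0 < δ) :
    ∃ η > 0, ∀ w, 0 ≤ w → w ≤ η → ∫ ω, unitTrunc (w * X ω) ^ 2 ∂μ ≤ δ * w := by
  obtain ⟨η, hη, hbound⟩ :=
    exists_pos_forall_le_of_tendsto_inv (tendsto_inv_mul_integral_indicator_sq hXm hX) hδ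
  refine ⟨η, hη, fun w hw0 hwη => ?_⟩
  rcases hw0.eq_or_lt with rfl | hw
  · simp [unitTrunc]
  have h := hbound w hw hwη
  rw [inv_inv] at h
  simp_rw [unitTrunc_mul_sq hw, integral_const_mul]
  calc w ^ 2 * ∫ ω, {y : ℝ | |y| ≤ w⁻¹}.indicator (· ^ 2) (X ω) ∂μ
      = w * (w * ∫ ω, {y : ℝ | |y| ≤ w⁻¹}.indicator (· ^ 2) (X ω) ∂μ) := by ring
    _ ≤ w * δ := by gcongr
    _ = δ * w := mul_comm w δ

end TailEstimates

theorem tendstoInMeasure_weighted_sum {Ω ι κ : Type*} [MeasurableSpace Ω] {μ : Measure Ω}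
    [IsProbabilityMeasure μ] {X : κ → Ω → ℝ} {X0 : Ω → ℝ}
    (hindep : Pairwise fun p q => IndepFun (X p) (X q) μ)
    (hident : ∀ p, IdentDistrib (X p) X0 μ μ) (hsymm : IdentDistrib X0 (-X0) μ μ)
    (hweak : Tendsto (fun n : ℕ => (n : ℝ) * μ.real {ω | (n : ℝ) < |X0 ω|}) atTop (𝓝 0))
    {l : Filter ι} {s : ι → Finset κ} {w : ι → κ → ℝ} {δ : ι → ℝ}
    (hw0 : ∀ i, ∀ p ∈ s i, 0 ≤ w i p) (hw1 : ∀ i, ∑ p ∈ s i, w i p ≤ 1)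
    (hwδ : ∀ i, ∀ p ∈ s i, w i p ≤ δ i) (hδ : Tendsto δ l (𝓝 0)) :
    TendstoInMeasure μ (fun i ω => ∑ p ∈ s i, w i p * X p ω) l (fun _ => 0) := by
  rw [tendstoInMeasure_iff_measureReal_dist]
  intro ε hε
  refine tendsto_order.2 ⟨fun a ha => Eventually.of_forall fun i =>
    ha.trans_le measureReal_nonneg, fun a ha => ?_⟩
  obtain ⟨η₁, hη₁, htail⟩ :=
    exists_measureReal_one_lt_abs_mul_le hweak (by positivity : 0 < a / 3)
  obtain ⟨η₂, hη₂, hmoment⟩ := exists_integral_unitTrunc_mul_sq_le hsymm.aemeasurable_fst hweak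
    (by positivity : 0 < a / 3 * ε ^ 2)
  filter_upwards [hδ.eventually (gt_mem_nhds (lt_min hη₁ hη₂))] with i hi
  have hsmall : ∀ p ∈ s i, 0 ≤ w i p ∧ w i p ≤ η₁ ∧ w i p ≤ η₂ := fun p hp =>
    ⟨hw0 i p hp, (hwδ i p hp).trans (hi.le.trans (min_le_left _ _)),
      (hwδ i p hp).trans (hi.le.trans (min_le_right _ _))⟩
  have hchebyshev := measureReal_abs_sum_ge_le (Y := fun p ω => w i p * X p ω) (s := s i)
    (fun p _ => (hident p).aemeasurable_fst.const_mul _)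
    (fun p _ q _ hpq => (hindep hpq).comp (measurable_const_mul _) (measurable_const_mul _))
    (fun p _ => identDistrib_const_mul_neg (hident p) hsymm _) hε
  simp only [Real.dist_eq, sub_zero]
  calc μ.real {ω | ε ≤ |∑ p ∈ s i, w i p * X p ω|}
      ≤ ∑ p ∈ s i, μ.real {ω | 1 < |w i p * X p ω|} +
          (∑ p ∈ s i, ∫ ω, unitTrunc (w i p * X p ω) ^ 2 ∂μ) / ε ^ 2 := hchebyshev
    _ ≤ ∑ p ∈ s i, a / 3 * w i p + (∑ p ∈ s i, a / 3 * ε ^ 2 * w i p) / ε ^ 2 := by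
        gcongr with p hp p hp
        · have h := ((hident p).const_mul (w i p)).measure_mem_eq (s := {y : ℝ | 1 < |y|})
            (measurableSet_lt measurable_const measurable_abs)
          exact (congrArg ENNReal.toReal h).trans_le (htail _ (hsmall p hp).1 (hsmall p hp).2.1)
        · have h := ((hident p).const_mul (w i p)).comp (measurable_unitTrunc.pow_const 2)
          exact h.integral_eq.trans_le (hmoment _ (hsmall p hp).1 (hsmall p hp).2.2)
    _ = 2 * (a / 3) * ∑ p ∈ s i, w i p := by
        rw [← mul_sum, ← mul_sum]
        field_simp
        ring
    _ < a := by nlinarith [hw1 i]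

theorem cesaro_field_wlln_symmetric_general
    {Ω : Type*} [MeasureSpace Ω] [IsProbabilityMeasure (ℙ : Measure Ω)]
    (α β : ℝ) (hα0 : 0 < α) (hαβ : α ≤ β) (hβ1 : β ≤ 1)
    (X : ℕ × ℕ → Ω → ℝ) (X0 : Ω → ℝ)
    (hindep : iIndepFun X ℙ)
    (hident : ∀ kl, IdentDistrib (X kl) X0 ℙ ℙ)
    (hsymm : Measure.map X0 ℙ = Measure.map (fun ω => -X0 ω) ℙ)
    (hweak : Tendsto (fun n : ℕ => (n : ℝ) * (ℙ {ω | (n : ℝ) < |X0 ω|}).toReal)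
      atTop (𝓝 0)) :
    TendstoInMeasure ℙ
      (fun mn : ℕ × ℕ => fun ω =>
        (cesaroA α mn.1 * cesaroA β mn.2)⁻¹ *
          ∑ k ∈ Finset.range (mn.1 + 1), ∑ l ∈ Finset.range (mn.2 + 1),
            cesaroA (α - 1) (mn.1 - k) * cesaroA (β - 1) (mn.2 - l) * X (k, l) ω)
      atTop (fun _ => (0 : ℝ)) := by
  have hα1 : α ≤ 1 := hαβ.trans hβ1
  have hβ0 : 0 < β := hα0.trans_le hαβ
  have hX0 : AEMeasurable X0 ℙ := (hident (0, 0)).aemeasurable_snd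
  have hmean : (fun mn : ℕ × ℕ => fun ω => (cesaroA α mn.1 * cesaroA β mn.2)⁻¹ *
      ∑ k ∈ range (mn.1 + 1), ∑ l ∈ range (mn.2 + 1),
        cesaroA (α - 1) (mn.1 - k) * cesaroA (β - 1) (mn.2 - l) * X (k, l) ω) =
      fun mn ω => ∑ kl ∈ range (mn.1 + 1) ×ˢ range (mn.2 + 1),
        cesaroWeight α β mn kl * X kl ω := by
    ext mn ω
    simp only [sum_product, mul_sum, cesaroWeight]
    exact sum_congr rfl fun k _ => sum_congr rfl fun l _ => by ring
  rw [hmean]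
  exact tendstoInMeasure_weighted_sum (fun p q hpq => hindep.indepFun hpq) hident
    ⟨hX0, hX0.neg, hsymm⟩ hweak (fun mn kl _ => cesaroWeight_nonneg hα0 hβ0 mn kl)
    (fun mn => (sum_cesaroWeight hα0 hβ0 mn).le)
    (fun mn kl _ => cesaroWeight_le hα0 hα1 hβ0 hβ1 mn kl)
    (tendsto_inv_cesaroA_mul_cesaroA hα0 hβ0)

theorem cesaro_field_wlln_symmetric
    {Ω : Type*} [MeasureSpace Ω] [IsProbabilityMeasure (ℙ : Measure Ω)]
    (α β : ℝ) (hα0 : 0 < α) (hαβ : α ≤ β) (hβ1 : β ≤ 1)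
    (X : ℕ × ℕ → Ω → ℝ) (X0 : Ω → ℝ)
    (hmeas : ∀ kl, Measurable (X kl)) (hmeas0 : Measurable X0)
    (hindep : iIndepFun X ℙ)
    (hident : ∀ kl, IdentDistrib (X kl) X0 ℙ ℙ)
    (hsymm : Measure.map X0 ℙ = Measure.map (fun ω => -X0 ω) ℙ)
    (hweak : Tendsto (fun n : ℕ => (n : ℝ) * (ℙ {ω | (n : ℝ) < |X0 ω|}).toReal)
      atTop (𝓝 0)) :
    TendstoInMeasure ℙ
      (fun mn : ℕ × ℕ => fun ω =>
        (cesaroA α mn.1 * cesaroA β mn.2)⁻¹ *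
          ∑ k ∈ Finset.range (mn.1 + 1), ∑ l ∈ Finset.range (mn.2 + 1),
            cesaroA (α - 1) (mn.1 - k) * cesaroA (β - 1) (mn.2 - l) * X (k, l) ω)
      atTop (fun _ => (0 : ℝ)) :=
  cesaro_field_wlln_symmetric_general α β hα0 hαβ hβ1 X X0 hindep hident hsymm hweak
end

section
/- Let 0 < α ≤ β ≤ 1 and let X be a real random variable with E X = 0 and E|X| < ∞. Then (1/(m^α n^β)) Σ_{k=1}^m Σ_{l=1}^n E(k^{α-1} l^{β-1} X 1{k^{α-1} l^{β-1}|X| ≤ m^α n^β}) → 0 as m, n → ∞ (i.e., as min(m,n) → ∞). -/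
open MeasureTheory ProbabilityTheory Filter Finset Topology

/-!
Write `c = k^(α-1) l^(β-1) ∈ (0, 1]` and `M = m^α n^β`. Since `E X = 0`, the truncated mean
`E[c X; c|X| ≤ M]` equals `-E[c X; c|X| > M]`, and `c|X| > M` forces `|X| > M` because `c ≤ 1`,
so each term is at most `c E[|X|; |X| > M]` in absolute value. Summing the weights with
`∑_{k ≤ m} k^(α-1) ≤ m^α / α` bounds the normalised double sum by `(αβ)⁻¹ E[|X|; |X| > M]`,
which tends to zero since `M → ∞` and `X` is integrable.
-/

-- Bernoulli's inequality `(1 - 1/(a+1))^α ≤ 1 - α/(a+1)`, multiplied by `(a+1)^α`.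
lemma rpow_add_mul_add_one_rpow_sub_one_le {α : ℝ} (hα0 : 0 < α) (hα1 : α ≤ 1) {a : ℝ}
    (ha : 0 ≤ a) : a ^ α + α * (a + 1) ^ (α - 1) ≤ (a + 1) ^ α := by
  have hb : 0 < a + 1 := by linarith
  have bernoulli := rpow_one_add_le_one_add_mul_self
    (s := -(a + 1)⁻¹) (by rw [neg_le_neg_iff]; exact inv_le_one_of_one_le₀ (by linarith))
    hα0.le hα1
  have hbase : 1 + -(a + 1)⁻¹ = a / (a + 1) := by field_simp; ring
  rw [hbase, Real.div_rpow ha hb.le, div_le_iff₀ (by positivity)] at bernoulli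
  have hpow : (a + 1) ^ (α - 1) = (a + 1) ^ α * (a + 1)⁻¹ := by
    rw [Real.rpow_sub_one hb.ne', div_eq_mul_inv]
  rw [hpow]
  linarith

lemma sum_Icc_rpow_sub_one_le {α : ℝ} (hα0 : 0 < α) (hα1 : α ≤ 1) (m : ℕ) :
    ∑ k ∈ Icc 1 m, (k : ℝ) ^ (α - 1) ≤ (m : ℝ) ^ α / α := by
  induction m with
  | zero => simp [Real.zero_rpow hα0.ne']
  | succ m ih =>
    rw [sum_Icc_succ_top (by omega), le_div_iff₀ hα0]
    push_cast
    have step := rpow_add_mul_add_one_rpow_sub_one_le hα0 hα1 (Nat.cast_nonneg (α := ℝ) m)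
    rw [le_div_iff₀ hα0] at ih
    linarith

lemma tendsto_natCast_rpow_mul_rpow_atTop {α β : ℝ} (hα : 0 < α) (hβ : 0 < β) :
    Tendsto (fun mn : ℕ × ℕ => (mn.1 : ℝ) ^ α * (mn.2 : ℝ) ^ β) atTop atTop := by
  have hm := (tendsto_rpow_atTop hα).comp (tendsto_natCast_atTop_atTop (R := ℝ))
  have hn := (tendsto_rpow_atTop hβ).comp (tendsto_natCast_atTop_atTop (R := ℝ))
  rw [← prod_atTop_atTop_eq]
  exact (hm.comp tendsto_fst).atTop_mul_atTop₀ (hn.comp tendsto_snd)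

section Truncation

variable {Ω : Type*} [MeasurableSpace Ω] {μ : Measure Ω} {X : Ω → ℝ}

lemma tendsto_setIntegral_abs_gt_atTop (hXm : Measurable X) (hX : Integrable X μ) :
    Tendsto (fun M : ℝ => ∫ ω in {ω | M < |X ω|}, |X ω| ∂μ) atTop (𝓝 0) := by
  have hset (M : ℝ) : MeasurableSet {ω | M < |X ω|} := measurableSet_lt measurable_const hXm.abs
  simp_rw [← integral_indicator (hset _)]
  rw [← integral_zero Ω ℝ]
  refine tendsto_integral_filter_of_dominated_convergence (fun ω => |X ω|)
    (.of_forall fun M => (hX.abs.indicator (hset M)).aestronglyMeasurable)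
    (.of_forall fun M => .of_forall fun ω => ?_) hX.abs (.of_forall fun ω => ?_)
  · simpa using norm_indicator_le_norm_self (fun ω => |X ω|) ω
  · refine tendsto_const_nhds.congr' ?_
    filter_upwards [eventually_ge_atTop |X ω|] with M hM
    exact (Set.indicator_of_notMem (show ω ∉ {ω | M < |X ω|} from not_lt.mpr hM) _).symm

noncomputable def truncatedWeightedMean (μ : Measure Ω) (X : Ω → ℝ) (c M : ℝ) : ℝ :=
  ∫ ω, (if c * |X ω| ≤ M then c * X ω else 0) ∂μ

lemma abs_truncatedWeightedMean_le (hXm : Measurable X) (hX : Integrable X μ)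
    (hmean : ∫ ω, X ω ∂μ = 0) {c : ℝ} (hc0 : 0 ≤ c) (hc1 : c ≤ 1) (M : ℝ) :
    |truncatedWeightedMean μ X c M| ≤ c * ∫ ω in {ω | M < |X ω|}, |X ω| ∂μ := by
  set s := {ω | c * |X ω| ≤ M}
  have hs : MeasurableSet s := measurableSet_le (hXm.abs.const_mul c) measurable_const
  have hcompl : ∫ ω in s, c * X ω ∂μ = -∫ ω in sᶜ, c * X ω ∂μ := by
    have := integral_add_compl hs (hX.const_mul c)
    rw [integral_const_mul (μ := μ), hmean, mul_zero] at this
    linarith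
  have hsub : sᶜ ⊆ {ω | M < |X ω|} := fun ω (hω : ¬c * |X ω| ≤ M) =>
    (not_le.mp hω).trans_le (mul_le_of_le_one_left (abs_nonneg _) hc1)
  calc |truncatedWeightedMean μ X c M| = |∫ ω in s, c * X ω ∂μ| := by
        rw [← integral_indicator hs]; rfl
    _ = |∫ ω in sᶜ, c * X ω ∂μ| := by rw [hcompl, abs_neg]
    _ ≤ ∫ ω in sᶜ, |c * X ω| ∂μ := abs_integral_le_integral_abs
    _ = c * ∫ ω in sᶜ, |X ω| ∂μ := by
        simp_rw [abs_mul, abs_of_nonneg hc0]; exact integral_const_mul _ _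
    _ ≤ c * ∫ ω in {ω | M < |X ω|}, |X ω| ∂μ :=
        mul_le_mul_of_nonneg_left (setIntegral_mono_set hX.abs.integrableOn
          (.of_forall fun ω => abs_nonneg _) hsub.eventuallyLE) hc0

lemma abs_sum_sum_truncatedWeightedMean_le (hXm : Measurable X) (hX : Integrable X μ)
    (hmean : ∫ ω, X ω ∂μ = 0) {α β : ℝ} (hα0 : 0 < α) (hα1 : α ≤ 1) (hβ0 : 0 < β) (hβ1 : β ≤ 1)
    (m n : ℕ) (M : ℝ) :
    |∑ k ∈ Icc 1 m, ∑ l ∈ Icc 1 n,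
        truncatedWeightedMean μ X ((k : ℝ) ^ (α - 1) * (l : ℝ) ^ (β - 1)) M| ≤
      (m : ℝ) ^ α / α * ((n : ℝ) ^ β / β) * ∫ ω in {ω | M < |X ω|}, |X ω| ∂μ := by
  have weight_le_one {γ : ℝ} (hγ : γ ≤ 1) {k N : ℕ} (hk : k ∈ Icc 1 N) :
      (k : ℝ) ^ (γ - 1) ≤ 1 :=
    Real.rpow_le_one_of_one_le_of_nonpos (by exact_mod_cast (mem_Icc.mp hk).1) (by linarith)
  calc _ ≤ ∑ k ∈ Icc 1 m, ∑ l ∈ Icc 1 n, (k : ℝ) ^ (α - 1) * (l : ℝ) ^ (β - 1) *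
        ∫ ω in {ω | M < |X ω|}, |X ω| ∂μ := by
        refine (abs_sum_le_sum_abs _ _).trans (sum_le_sum fun k hk => ?_)
        refine (abs_sum_le_sum_abs _ _).trans (sum_le_sum fun l hl => ?_)
        exact abs_truncatedWeightedMean_le hXm hX hmean (by positivity)
          (mul_le_one₀ (weight_le_one hα1 hk) (by positivity) (weight_le_one hβ1 hl)) M
    _ = (∑ k ∈ Icc 1 m, (k : ℝ) ^ (α - 1)) * (∑ l ∈ Icc 1 n, (l : ℝ) ^ (β - 1)) *
        ∫ ω in {ω | M < |X ω|}, |X ω| ∂μ := by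
        simp_rw [sum_mul_sum, sum_mul]
    _ ≤ _ := by
        gcongr
        · exact sum_Icc_rpow_sub_one_le hα0 hα1 m
        · exact sum_Icc_rpow_sub_one_le hβ0 hβ1 n

end Truncation

theorem truncated_mean_sum_tendsto_zero_general
    {Ω : Type*} [MeasureSpace Ω]
    (α β : ℝ) (hα0 : 0 < α) (hαβ : α ≤ β) (hβ1 : β ≤ 1)
    (X : Ω → ℝ) (hmeas : Measurable X)
    (hint : Integrable X ℙ) (hmean : ∫ ω, X ω ∂ℙ = 0) :
    Tendsto (fun mn : ℕ × ℕ =>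
        ((mn.1 : ℝ) ^ α * (mn.2 : ℝ) ^ β)⁻¹ *
          ∑ k ∈ Finset.Icc 1 mn.1, ∑ l ∈ Finset.Icc 1 mn.2,
            ∫ ω, (if (k : ℝ) ^ (α - 1) * (l : ℝ) ^ (β - 1) * |X ω| ≤
                (mn.1 : ℝ) ^ α * (mn.2 : ℝ) ^ β then
              (k : ℝ) ^ (α - 1) * (l : ℝ) ^ (β - 1) * X ω
            else 0) ∂ℙ)
      atTop (𝓝 0) := by
  have hβ0 : 0 < β := hα0.trans_le hαβ
  have hα1 : α ≤ 1 := hαβ.trans hβ1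
  have hdom := ((tendsto_setIntegral_abs_gt_atTop hmeas hint).comp
    (tendsto_natCast_rpow_mul_rpow_atTop hα0 hβ0)).const_mul (α * β)⁻¹
  rw [mul_zero] at hdom
  refine squeeze_zero_norm' ?_ hdom
  filter_upwards [eventually_ge_atTop (1, 1)] with ⟨m, n⟩ ⟨hm, hn⟩
  have hM : 0 < (m : ℝ) ^ α * (n : ℝ) ^ β := by
    have : (0 : ℝ) < m := by exact_mod_cast hm
    have : (0 : ℝ) < n := by exact_mod_cast hn
    positivity
  rw [norm_mul, norm_inv, Real.norm_eq_abs, Real.norm_eq_abs, abs_of_pos hM]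
  calc _ ≤ ((m : ℝ) ^ α * (n : ℝ) ^ β)⁻¹ * ((m : ℝ) ^ α / α * ((n : ℝ) ^ β / β) *
        ∫ ω in {ω | (m : ℝ) ^ α * (n : ℝ) ^ β < |X ω|}, |X ω|) := by
        gcongr
        exact abs_sum_sum_truncatedWeightedMean_le hmeas hint hmean hα0 hα1 hβ0 hβ1 m n _
    _ = _ := by
        simp only [Function.comp_apply]
        field_simp

theorem truncated_mean_sum_tendsto_zero
    {Ω : Type*} [MeasureSpace Ω] [IsProbabilityMeasure (ℙ : Measure Ω)]
    (α β : ℝ) (hα0 : 0 < α) (hαβ : α ≤ β) (hβ1 : β ≤ 1)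
    (X : Ω → ℝ) (hmeas : Measurable X)
    (hint : Integrable X ℙ) (hmean : ∫ ω, X ω ∂ℙ = 0) :
    Tendsto (fun mn : ℕ × ℕ =>
        ((mn.1 : ℝ) ^ α * (mn.2 : ℝ) ^ β)⁻¹ *
          ∑ k ∈ Finset.Icc 1 mn.1, ∑ l ∈ Finset.Icc 1 mn.2,
            ∫ ω, (if (k : ℝ) ^ (α - 1) * (l : ℝ) ^ (β - 1) * |X ω| ≤
                (mn.1 : ℝ) ^ α * (mn.2 : ℝ) ^ β then
              (k : ℝ) ^ (α - 1) * (l : ℝ) ^ (β - 1) * X ω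
            else 0) ∂ℙ)
      atTop (𝓝 0) :=
  truncated_mean_sum_tendsto_zero_general α β hα0 hαβ hβ1 X hmeas hint hmean
end
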